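/- For λ_0, λ_1 ∈ ℂ, the quartic polynomial λ_0·x_0^4 + λ_1·(x_1^3x_2 + x_1x_3^3 + x_2^3x_3) ∈ ℂ[x_0,x_1,x_2,x_3] is nonsingular if and only if λ_0·λ_1 ≠ 0. -/
import Mathlib


open MvPolynomial

/-- The pencil of quartics `λ₀·x₀⁴ + λ₁·(x₁³x₂ + x₁x₃³ + x₂³x₃)`. -/
noncomputable def pencilP (lam0 lam1 : ℂ) : MvPolynomial (Fin 4) ℂ :=
  C lam0 * X 0 ^ 4 + C lam1 * (X 1 ^ 3 * X 2 + X 1 * X 3 ^ 3 + X 2 ^ 3 * X 3)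

lemma cube_aux (a b c : ℂ) (h1 : 3*a^2*b + c^3 = 0) (h2 : a^3 + 3*b^2*c = 0)
    (h3 : 3*a*c^2 + b^3 = 0) : a = 0 ∧ b = 0 ∧ c = 0 := by
  have key : (a*b*c)^3 = 0 := by
    have h : 28*(a*b*c)^3 = 0 := by
      linear_combination (b^3*c^3)*h2 - (3*b^2*c^4)*h3 + (9*a*b^2*c^3)*h1
    exact (mul_eq_zero.mp h).resolve_left (by norm_num)
  have habc : a*b*c = 0 := by
    exact pow_eq_zero_iff (by norm_num) |>.mp key
  rcases mul_eq_zero.mp habc with hab | hc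
  · rcases mul_eq_zero.mp hab with ha | hb
    · have hc : c = 0 := by
        have : c^3 = 0 := by subst ha; linear_combination h1
        exact pow_eq_zero_iff (by norm_num) |>.mp this
      have hb : b = 0 := by
        have : b^3 = 0 := by subst ha; linear_combination h3
        exact pow_eq_zero_iff (by norm_num) |>.mp this
      exact ⟨ha, hb, hc⟩
    · have hc : c = 0 := by
        have : c^3 = 0 := by subst hb; linear_combination h1
        exact pow_eq_zero_iff (by norm_num) |>.mp this
      have ha : a = 0 := by
        have : a^3 = 0 := by subst hb hc; linear_combination h2
        exact pow_eq_zero_iff (by norm_num) |>.mp this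
      exact ⟨ha, hb, hc⟩
  · have ha : a = 0 := by
      have : a^3 = 0 := by subst hc; linear_combination h2
      exact pow_eq_zero_iff (by norm_num) |>.mp this
    have hb : b = 0 := by
      have : b^3 = 0 := by subst hc; linear_combination h3
      exact pow_eq_zero_iff (by norm_num) |>.mp this
    exact ⟨ha, hb, hc⟩

theorem stmt18 (lam0 lam1 : ℂ) :
    (∀ z : Fin 4 → ℂ,
        (∀ i, MvPolynomial.eval z (MvPolynomial.pderiv i (pencilP lam0 lam1)) = 0) →
          z = 0)
      ↔ lam0 * lam1 ≠ 0 := by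
  constructor
  · intro h hzero
    rcases mul_eq_zero.mp hzero with h0 | h1
    · have := h (fun i => if i = 0 then 1 else 0) (by
        intro i
        fin_cases i <;> simp [pencilP, h0, pderiv_mul, pderiv_pow, pderiv_X, Pi.single_apply])
      have := congrFun this 0
      simp at this
    · have := h (fun i => if i = 1 then 1 else 0) (by
        intro i
        fin_cases i <;> simp [pencilP, h1, pderiv_mul, pderiv_pow, pderiv_X, Pi.single_apply])
      have := congrFun this 1
      simp at this
  · intro hne z hz
    obtain ⟨h0, h1⟩ := mul_ne_zero_iff.mp hne
    have e0 := hz 0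
    have e1 := hz 1
    have e2 := hz 2
    have e3 := hz 3
    simp [pencilP, pderiv_mul, pderiv_pow, pderiv_X, Pi.single_apply, h0, h1] at e0 e1 e2 e3
    have key := cube_aux (z 1) (z 2) (z 3)
      (by linear_combination e1) (by linear_combination e2) (by linear_combination e3)
    funext i
    fin_cases i
    · simpa using pow_eq_zero_iff (n := 3) (by norm_num) |>.mp (by simpa using e0)
    · simpa using key.1
    · simpa using key.2.1
    · simpa using key.2.2
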